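/- arXiv:2403.06480 — 6 statements merged into one kernel-verified Lean document; each statement's English description precedes it below -/
import Mathlib

section
/- On a ℤ-subshift X without periodic points, no nonempty open subset U of X exists on which some power of the shift σ^k acts as the reversal map f (defined by f(x)_i = x_{−1−i}), provided X is minimal and reversal-invariant. -/
/-- The shift by `p` on two-sided sequences. -/
def shiftZ {A : Type} (p : ℤ) (x : ℤ → A) : ℤ → A := fun i => x (i + p)

/-- The reversal map `f(x)_i = x_{-1-i}`. -/
def revZ {A : Type} (x : ℤ → A) : ℤ → A := fun i => x (-1 - i)

lemma shift_shift {A : Type} (a b : ℤ) (x : ℤ → A) :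
    shiftZ a (shiftZ b x) = shiftZ (a + b) x := by
  funext i
  simp [shiftZ, add_assoc]

lemma shift_zero {A : Type} (x : ℤ → A) : shiftZ 0 x = x := by
  funext i; simp [shiftZ]

lemma rev_shift {A : Type} (p : ℤ) (x : ℤ → A) :
    revZ (shiftZ p x) = shiftZ (-p) (revZ x) := by
  funext i
  simp only [revZ, shiftZ]
  congr 1
  ring

lemma continuous_shiftZ {A : Type} [TopologicalSpace A] (p : ℤ) :
    Continuous (fun y : ℤ → A => shiftZ p y) :=
  continuous_pi fun i => continuous_apply (i + p)

/-- On a minimal aperiodic reversal-invariant ℤ-subshift, no power of the shift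
agrees with the reversal map on a nonempty (relatively) open set. -/
theorem stmt8 (A : Type) [Fintype A] [TopologicalSpace A] [DiscreteTopology A]
    (X : Set (ℤ → A)) (hcl : IsClosed X)
    (hinv : ∀ p : ℤ, ∀ x ∈ X, shiftZ p x ∈ X)
    (hmin : ∀ x ∈ X, ∀ y ∈ X, y ∈ closure {z | ∃ p : ℤ, z = shiftZ p x})
    (hap : ∀ x ∈ X, ∀ p : ℤ, 1 ≤ p → shiftZ p x ≠ x)
    (hrev : ∀ x ∈ X, revZ x ∈ X) :
    ∀ U : Set (ℤ → A), IsOpen U → (X ∩ U).Nonempty →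
      ∀ k : ℤ, ¬ (∀ x ∈ X ∩ U, shiftZ k x = revZ x) := by
  intro U hU hne k hagree
  obtain ⟨x, hxX, hxU⟩ := hne
  -- no nontrivial period for any point of X
  have noper : ∀ z ∈ X, ∀ d : ℤ, d ≠ 0 → shiftZ d z ≠ z := by
    intro z hz d hd hzd
    rcases lt_or_gt_of_ne hd with h | h
    · have h2 : shiftZ (-d) z = z := by
        conv_lhs => rw [← hzd]
        rw [shift_shift, neg_add_cancel, shift_zero]
      exact hap z hz (-d) (by omega) h2
    · exact hap z hz d (by omega) hzd
  -- key: two orbit-related points in X ∩ U give a contradiction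
  have key : ∀ m : ℤ, m ≠ 0 → shiftZ m x ∉ X ∩ U := by
    intro m hm ⟨hyX, hyU⟩
    have h1 : shiftZ k x = revZ x := hagree x ⟨hxX, hxU⟩
    have h2 : shiftZ k (shiftZ m x) = revZ (shiftZ m x) := hagree _ ⟨hyX, hyU⟩
    rw [rev_shift, ← h1, shift_shift, shift_shift] at h2
    -- h2 : shiftZ (k + m) x = shiftZ (-m + k) x
    have h3 : shiftZ (2 * m) x = x := by
      have := congrArg (shiftZ (m - k)) h2
      rwa [shift_shift, shift_shift, show m - k + (k + m) = 2 * m by ring,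
        show m - k + (-m + k) = 0 by ring, shift_zero] at this
    exact noper x hxX (2 * m) (by omega) h3
  -- Case split: is there a point of X ∩ U other than x?
  by_cases hsing : ∃ y ∈ X ∩ U, y ≠ x
  · -- another point y: find a shift of x in U near y, away from x
    obtain ⟨y, hyXU, hyx⟩ := hsing
    have hV : IsOpen (U ∩ {x}ᶜ) := hU.inter isOpen_compl_singleton
    have hyV : y ∈ U ∩ {x}ᶜ := ⟨hyXU.2, hyx⟩
    have hdense := hmin x hxX y hyXU.1
    obtain ⟨z, hzV, m, rfl⟩ := mem_closure_iff.mp hdense _ hV hyV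
    have hm : m ≠ 0 := by
      rintro rfl
      exact hzV.2 (by simp [shift_zero])
    exact key m hm ⟨hinv m x hxX, hzV.1⟩
  · -- X ∩ U = {x}: compactness shows X is a finite orbit, contradiction
    push_neg at hsing
    have hXU : ∀ y ∈ X ∩ U, y = x := hsing
    -- cover X by preimages of U under shifts
    set V : ℤ → Set (ℤ → A) := fun p => (fun y => shiftZ p y) ⁻¹' U with hVdef
    have hVopen : ∀ p, IsOpen (V p) := fun p => hU.preimage (continuous_shiftZ p)
    have hXsub : X ⊆ ⋃ p, V p := by
      intro z hz
      have := hmin z hz x hxX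
      obtain ⟨w, hwU, p, rfl⟩ := mem_closure_iff.mp this U hU hxU
      exact Set.mem_iUnion.mpr ⟨p, hwU⟩
    have hcomp : IsCompact X := hcl.isCompact
    obtain ⟨s, hs⟩ := hcomp.elim_finite_subcover V hVopen hXsub
    -- every point of X is a shift of x by some -p, p ∈ s
    have hXfin : X ⊆ (fun p => shiftZ (-p) x) '' ↑s := by
      intro z hz
      obtain ⟨p, hps, hzp⟩ := Set.mem_iUnion₂.mp (hs hz)
      have hzpx : shiftZ p z = x := hXU _ ⟨hinv p z hz, hzp⟩
      refine ⟨p, hps, ?_⟩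
      show shiftZ (-p) x = z
      rw [← hzpx, shift_shift, neg_add_cancel, shift_zero]
    have hfin : X.Finite := (s.finite_toSet.image _).subset hXfin
    -- but the orbit of x is infinite
    have hinj : Function.Injective (fun m : ℤ => shiftZ m x) := by
      intro m n hmn
      by_contra hne
      apply noper x hxX (m - n) (by omega)
      have := congrArg (shiftZ (-n)) hmn
      rw [shift_shift, shift_shift, neg_add_cancel, shift_zero] at this
      rwa [show m - n = -n + m by ring]
    have hXinf : X.Infinite :=
      Set.infinite_of_injective_forall_mem hinj (fun m => hinv m x hxX)
    exact hXinf hfin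
end

section
/- Let G be a finitely generated group and X_1, …, X_k ⊆ A^G pairwise disjoint subshifts of finite type. Then the union X = X_1 ∪ ⋯ ∪ X_k is a subshift of finite type. -/
/-- The shift action of `G` on `G → A`: `(g • x) h = x (h g)`. -/
def shiftG {G A : Type} [Group G] (g : G) (x : G → A) : G → A := fun h => x (h * g)

/-- A subshift of finite type: the set of configurations avoiding a (finite, since the
domain `D` is finite and `A` is finite) set `F` of forbidden patterns of shape `D`. -/
def IsSFT {G A : Type} [Group G] [Fintype A] (X : Set (G → A)) : Prop :=
  ∃ (D : Finset G) (F : Set ({d // d ∈ D} → A)),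
    X = {x | ∀ g : G, (fun d : {d // d ∈ D} => x ((d : G) * g)) ∉ F}

/-- A finite union of pairwise disjoint SFTs on a finitely generated group is an SFT. -/
theorem stmt10 {G A : Type} [Group G] (hG : Group.FG G) [Fintype A]
    (k : ℕ) (X : Fin k → Set (G → A))
    (hSFT : ∀ i, IsSFT (X i))
    (hdisj : ∀ i j, i ≠ j → Disjoint (X i) (X j)) :
    IsSFT (⋃ i, X i) := by
  classical
  obtain ⟨S, hS⟩ := hG.out
  choose Di Fi hXi using hSFT
  -- shift invariance of each `X i`
  have hshift : ∀ (i : Fin k) (x : G → A) (g : G), x ∈ X i → (fun h => x (h * g)) ∈ X i := by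
    intro i x g hx
    rw [hXi i] at hx ⊢
    intro h
    simpa [mul_assoc] using hx (h * g)
  -- topology
  letI : TopologicalSpace A := ⊥
  haveI : DiscreteTopology A := ⟨rfl⟩
  have hclosed : ∀ i, IsClosed (X i) := by
    intro i
    rw [hXi i]
    have heq : {x : G → A | ∀ g : G, (fun d : {d // d ∈ Di i} => x ((d : G) * g)) ∉ Fi i}
        = ⋂ g : G, (fun x : G → A => fun d : {d // d ∈ Di i} => x ((d : G) * g)) ⁻¹' (Fi i)ᶜ := by
      ext x; simp [Set.mem_iInter]
    rw [heq]
    haveI : DiscreteTopology ({d // d ∈ Di i} → A) := Pi.discreteTopology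
    exact isClosed_iInter fun g => IsClosed.preimage
      (continuous_pi fun d : {d // d ∈ Di i} => continuous_apply ((d : G) * g))
      (isClosed_discrete ((Fi i)ᶜ))
  -- separating window via compactness
  have key : ∀ i j : Fin k, i ≠ j →
      ∃ D : Finset G, ∀ x y : G → A, x ∈ X i → y ∈ X j → (∀ d ∈ D, x d = y d) → False := by
    intro i j hij
    by_contra hcon
    push_neg at hcon
    set t : Finset G → Set ((G → A) × (G → A)) :=
      fun D => {p | p.1 ∈ X i ∧ p.2 ∈ X j ∧ ∀ d ∈ D, p.1 d = p.2 d} with ht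
    have htcl : ∀ D, IsClosed (t D) := by
      intro D
      have : t D = ((X i) ×ˢ (X j)) ∩ ⋂ d ∈ D, {p : (G → A) × (G → A) | p.1 d = p.2 d} := by
        ext p; simp [ht, Set.mem_prod, and_assoc]
      rw [this]
      refine IsClosed.inter ((hclosed i).prod (hclosed j)) ?_
      refine isClosed_biInter fun d _ => isClosed_eq ?_ ?_
      · exact (continuous_apply d).comp continuous_fst
      · exact (continuous_apply d).comp continuous_snd
    have htd : Directed (· ⊇ ·) t := by
      intro D D'
      refine ⟨D ∪ D', ?_, ?_⟩ <;>
        exact fun p hp => ⟨hp.1, hp.2.1, fun d hd => hp.2.2 d (by simp [Finset.mem_union, hd])⟩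
    have htn : ∀ D, (t D).Nonempty := by
      intro D
      obtain ⟨x, y, hx, hy, hagree⟩ := hcon D
      exact ⟨(x, y), hx, hy, hagree.1⟩
    have htc : ∀ D, IsCompact (t D) := fun D => (htcl D).isCompact
    obtain ⟨⟨x, y⟩, hxy⟩ :=
      IsCompact.nonempty_iInter_of_directed_nonempty_isCompact_isClosed t htd htn htc htcl
    have h0 := Set.mem_iInter.mp hxy ∅
    have hxy' : x = y := by
      funext g
      exact (Set.mem_iInter.mp hxy {g}).2.2 g (by simp)
    exact Set.disjoint_left.mp (hdisj i j hij) h0.1 (hxy' ▸ h0.2.1)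
  -- one window for all pairs
  set D : Finset G := (Finset.univ : Finset (Fin k × Fin k)).biUnion
      (fun p => if h : p.1 = p.2 then ∅ else (key p.1 p.2 h).choose) with hD
  have hsep : ∀ (i j : Fin k) (x y : G → A), x ∈ X i → y ∈ X j →
      (∀ d ∈ D, x d = y d) → i = j := by
    intro i j x y hx hy hagree
    by_contra hij
    refine (key i j hij).choose_spec x y hx hy fun d hd => hagree d ?_
    rw [hD, Finset.mem_biUnion]
    exact ⟨(i, j), Finset.mem_univ _, by rw [dif_neg hij]; exact hd⟩
  -- the big window
  set E : Finset G := D ∪ S.biUnion (fun s => D.image (· * s)) ∪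
      (Finset.univ : Finset (Fin k)).biUnion (fun i => Di i) with hE
  have hDE : ∀ d ∈ D, d ∈ E := fun d hd => by
    simp [hE, Finset.mem_union, hd]
  have hDsE : ∀ s ∈ S, ∀ d ∈ D, d * s ∈ E := by
    intro s hs d hd
    simp only [hE, Finset.mem_union, Finset.mem_biUnion, Finset.mem_image]
    exact Or.inl (Or.inr ⟨s, hs, d, hd, rfl⟩)
  have hDiE : ∀ i : Fin k, ∀ d ∈ Di i, d ∈ E := by
    intro i d hd
    simp only [hE, Finset.mem_union, Finset.mem_biUnion]
    exact Or.inr ⟨i, Finset.mem_univ _, hd⟩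
  refine ⟨E, {p | ¬ ∃ i, ∃ y ∈ X i, ∀ d : {d // d ∈ E}, y (d : G) = p d}, ?_⟩
  ext x
  simp only [Set.mem_iUnion, Set.mem_setOf_eq, not_not]
  constructor
  · rintro ⟨i, hxi⟩ g
    exact ⟨i, fun h => x (h * g), hshift i x g hxi, fun d => rfl⟩
  · intro hx
    choose idx y hy hagree using hx
    -- uniqueness of the index at each `g`
    have huniq : ∀ (g : G) (i : Fin k) (z : G → A), z ∈ X i →
        (∀ d ∈ D, z d = x (d * g)) → i = idx g := by
      intro g i z hz hzd
      refine hsep i (idx g) z (y g) hz (hy g) fun d hd => ?_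
      rw [hzd d hd, hagree g ⟨d, hDE d hd⟩]
    -- the index is invariant under left multiplication by generators
    have hstep : ∀ s ∈ S, ∀ h : G, idx (s * h) = idx h := by
      intro s hs h
      refine (huniq (s * h) (idx h) (fun d => y h (d * s))
        (hshift (idx h) (y h) s (hy h)) ?_).symm
      intro d hd
      have h1 : y h (d * s) = x ((d * s) * h) := hagree h ⟨d * s, hDsE s hs d hd⟩
      show y h (d * s) = x (d * (s * h))
      rw [h1, mul_assoc]
    have hconst : ∀ g h : G, idx (g * h) = idx h := by
      intro g
      have hg : g ∈ Subgroup.closure (S : Set G) := by rw [hS]; exact Subgroup.mem_top g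
      induction hg using Subgroup.closure_induction with
      | mem s hs => exact hstep s hs
      | one => simp
      | mul a b _ _ pa pb => intro h; rw [mul_assoc, pa (b * h), pb h]
      | inv a _ pa => intro h; have := pa (a⁻¹ * h); simpa using this.symm
    have hidx : ∀ g : G, idx g = idx 1 := fun g => by
      simpa using hconst g 1
    refine ⟨idx 1, ?_⟩
    rw [hXi (idx 1)]
    intro g
    have hyg : y g ∈ X (idx 1) := hidx g ▸ hy g
    rw [hXi (idx 1)] at hyg
    have hpat : (fun d : {d // d ∈ Di (idx 1)} => x ((d : G) * g))
        = fun d : {d // d ∈ Di (idx 1)} => y g (d : G) := by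
      funext d
      exact (hagree g ⟨(d : G), hDiE (idx 1) d d.2⟩).symm
    rw [hpat]
    simpa using hyg 1
end

section
/- Let G be a finitely generated group, H ≤ G a finite-index subgroup, (G,X) a zero-dimensional compact G-system, and X' ⊆ X an H-invariant subset with G·X' = X. If the H-system (H, X') admits an SFT cover, then the G-system (G, X) admits an SFT cover. -/
/-- A `G`-invariant subset `T` of a space `Z` with `G`-action `act` admits an SFT cover:
there exist a `G`-SFT `Y` over a finite alphabet and a continuous surjective
equivariant map `Y → T`. -/
def SFTCovered {G : Type} [Group G] {Z : Type} [TopologicalSpace Z]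
    (act : G → Z → Z) (T : Set Z) : Prop :=
  ∃ (m : ℕ) (Y : Set (G → Fin m)), IsSFT Y ∧
    ∃ φ : (G → Fin m) → Z, ContinuousOn φ Y ∧ φ '' Y = T ∧
      ∀ g : G, ∀ y ∈ Y, φ (shiftG g y) = act g (φ y)

section Aux

variable {G : Type} [Group G]

/-- The "H-part" of `u : G` with respect to a right transversal of `H` in `G`. -/
noncomputable def hpart (H : Subgroup G) (u : G) : H :=
  ⟨u * (Quotient.out ((u⁻¹ : G) : G ⧸ H)), by
    have h : ((Quotient.out ((u⁻¹ : G) : G ⧸ H) : G) : G ⧸ H) = ((u⁻¹ : G) : G ⧸ H) :=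
      QuotientGroup.out_eq' _
    have h2 := QuotientGroup.eq.mp h.symm
    rwa [inv_inv] at h2⟩

lemma hpart_spec (H : Subgroup G) (u : G) :
    (hpart H u : G) = u * (Quotient.out ((u⁻¹ : G) : G ⧸ H)) := rfl

lemma hpart_mul (H : Subgroup G) (d : H) (u : G) :
    hpart H ((d : G) * u) = d * hpart H u := by
  have hq : ((((d : G) * u)⁻¹ : G) : G ⧸ H) = ((u⁻¹ : G) : G ⧸ H) := by
    rw [QuotientGroup.eq, inv_inv, mul_assoc, mul_inv_cancel]
    · simpa using d.2
  apply Subtype.ext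
  rw [Subgroup.coe_mul, hpart_spec, hpart_spec, hq, mul_assoc]

end Aux

/-- If `H` is a finite-index subgroup of the finitely generated group `G`, `X` a compact
metrizable zero-dimensional `G`-system, `X'` an `H`-invariant subset with `G ⬝ X' = X`,
and the `H`-system `X'` admits an SFT cover, then the `G`-system `X` admits an SFT cover. -/
theorem stmt12 {G : Type} [Group G] (hG : Group.FG G) (H : Subgroup G) [H.FiniteIndex]
    {X : Type} [TopologicalSpace X] [CompactSpace X]
    [TopologicalSpace.MetrizableSpace X] [TotallyDisconnectedSpace X]
    (act : G → X → X)
    (hcont : ∀ g : G, Continuous (act g))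
    (hone : ∀ x : X, act 1 x = x)
    (hmul : ∀ (g g' : G) (x : X), act (g * g') x = act g (act g' x))
    (X' : Set X)
    (hinv : ∀ h : H, ∀ x ∈ X', act (h : G) x ∈ X')
    (hgen : ∀ x : X, ∃ g : G, ∃ x' ∈ X', act g x' = x)
    (hcover : SFTCovered (fun h : H => act (h : G)) X') :
    SFTCovered act (Set.univ : Set X) := by
  classical
  obtain ⟨S, hS⟩ : ∃ S : Finset G, Subgroup.closure (S : Set G) = ⊤ := Group.FG.out
  obtain ⟨m, Y, ⟨D, F, hYdef⟩, φ, hφc, hφY, hφeq⟩ := hcover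
  haveI : Fintype (G ⧸ H) := Fintype.ofFinite _
  set M := Fintype.card ((G ⧸ H) × Fin m) with hM
  set e : ((G ⧸ H) × Fin m) ≃ Fin M := Fintype.equivFin _ with he
  set dec : Fin M → ((G ⧸ H) × Fin m) := fun a => e.symm a with hdec
  -- the window of the new SFT
  set D' : Finset G := (D.image (fun d : H => (d : G))) ∪ S ∪ {1} with hD'
  have h1D' : (1 : G) ∈ D' := by simp [hD']
  have hSD' : ∀ s ∈ S, s ∈ D' := by intro s hs; simp [hD', hs]
  have hDD' : ∀ d : ↥H, d ∈ D → (d : G) ∈ D' := by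
    intro d hd
    simp only [hD', Finset.mem_union, Finset.mem_image]
    exact Or.inl (Or.inl ⟨d, hd, rfl⟩)
  -- extension of a pattern to a function on all of G
  set ext : ({d // d ∈ D'} → Fin M) → G → ((G ⧸ H) × Fin m) :=
    fun p g => if h : g ∈ D' then dec (p ⟨g, h⟩) else dec (p ⟨1, h1D'⟩) with hext
  -- the forbidden patterns
  set F' : Set ({d // d ∈ D'} → Fin M) :=
    {p | (∃ s ∈ S, (ext p s).1 ≠ s • (ext p 1).1) ∨
         ((fun d : {d // d ∈ D} => (ext p ((d : ↥H) : G)).2) ∈ F)} with hF'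
  -- the new SFT
  set YS : Set (G → Fin M) :=
    {y | ∀ g : G, (fun d : {d // d ∈ D'} => y ((d : G) * g)) ∉ F'} with hYS
  have hpat : ∀ (y : G → Fin M) (g x : G) (hx : x ∈ D'),
      ext (fun d : {d // d ∈ D'} => y ((d : G) * g)) x = dec (y (x * g)) := by
    intro y g x hx
    simp only [hext]
    rw [dif_pos hx]
  -- membership characterization
  have hmem : ∀ y : G → Fin M, y ∈ YS ↔
      ((∀ g : G, ∀ s ∈ S, (dec (y (s * g))).1 = s • (dec (y g)).1) ∧
       (∀ g : G, (fun d : {d // d ∈ D} => (dec (y (((d : ↥H) : G) * g))).2) ∉ F)) := by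
    intro y
    constructor
    · intro hy
      constructor
      · intro g s hs
        by_contra hne
        refine hy g (Or.inl ⟨s, hs, ?_⟩)
        rw [hpat y g s (hSD' s hs), hpat y g 1 h1D', one_mul]
        exact hne
      · intro g hgF
        refine hy g (Or.inr ?_)
        have : (fun d : {d // d ∈ D} =>
            (ext (fun d' : {d // d ∈ D'} => y ((d' : G) * g)) ((d : ↥H) : G)).2)
            = fun d : {d // d ∈ D} => (dec (y (((d : ↥H) : G) * g))).2 := by
          funext d
          rw [hpat y g _ (hDD' d d.2)]
        rw [this]
        exact hgF
    · rintro ⟨h1, h2⟩ g hg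
      rcases hg with ⟨s, hs, hne⟩ | hF
      · refine hne ?_
        rw [hpat y g s (hSD' s hs), hpat y g 1 h1D', one_mul]
        exact h1 g s hs
      · refine h2 g ?_
        have : (fun d : {d // d ∈ D} =>
            (ext (fun d' : {d // d ∈ D'} => y ((d' : G) * g)) ((d : ↥H) : G)).2)
            = fun d : {d // d ∈ D} => (dec (y (((d : ↥H) : G) * g))).2 := by
          funext d
          rw [hpat y g _ (hDD' d d.2)]
        rw [this] at hF
        exact hF
  -- global marker law
  have hmark : ∀ y : G → Fin M,
      (∀ g : G, ∀ s ∈ S, (dec (y (s * g))).1 = s • (dec (y g)).1) →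
      ∀ k g : G, (dec (y (k * g))).1 = k • (dec (y g)).1 := by
    intro y hy k g
    have hk : k ∈ Subgroup.closure (S : Set G) := by rw [hS]; trivial
    have main : ∀ g : G, (dec (y (k * g))).1 = k • (dec (y g)).1 :=
      Subgroup.closure_induction
        (fun s hs g => hy g s hs)
        (fun g => by rw [one_mul, one_smul])
        (fun a b _ _ pa pb g => by rw [mul_assoc, pa, pb, mul_smul])
        (fun a _ pa g => by
          have h := pa (a⁻¹ * g)
          rw [mul_inv_cancel_left] at h
          rw [h, inv_smul_smul])
        hk
    exact main g
  -- the column of a configuration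
  set col : (G → Fin M) → G → (↥H → Fin m) :=
    fun y g h' => (dec (y ((h' : G) * g))).2 with hcol
  have hcolY : ∀ y : G → Fin M,
      (∀ g : G, (fun d : {d // d ∈ D} => (dec (y (((d : ↥H) : G) * g))).2) ∉ F) →
      ∀ g : G, col y g ∈ Y := by
    intro y hPC g
    rw [hYdef]
    intro h
    have : (fun d : {d // d ∈ D} => col y g ((d : ↥H) * h))
        = fun d : {d // d ∈ D} => (dec (y (((d : ↥H) : G) * ((h : G) * g)))).2 := by
      funext d
      simp only [hcol]
      rw [Subgroup.coe_mul, mul_assoc]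
    rw [this]
    exact hPC ((h : G) * g)
  set K : (G → Fin M) → G := fun y => Quotient.out ((dec (y 1)).1) with hK
  set Ψ : (G → Fin M) → X := fun y => act (K y) (φ (col y (K y)⁻¹)) with hΨ
  refine ⟨M, YS, ⟨D', F', hYS⟩, Ψ, ?_, ?_, ?_⟩
  · -- continuity
    intro y₀ hy₀
    set k₀ : G := K y₀ with hk₀
    set V : Set (G → Fin M) := (fun y : G → Fin M => y 1) ⁻¹' {y₀ 1} with hV
    have hVopen : IsOpen V := (continuous_apply 1).isOpen_preimage _ (isOpen_discrete _)
    have hVnhds : V ∈ nhds y₀ := hVopen.mem_nhds (by simp [hV])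
    have hcolcont : Continuous (fun y : G → Fin M => col y k₀⁻¹) := by
      refine continuous_pi fun h' => ?_
      exact (continuous_of_discreteTopology
        (f := fun a : Fin M => (dec a).2)).comp (continuous_apply _)
    have hmaps : Set.MapsTo (fun y : G → Fin M => col y k₀⁻¹) (YS ∩ V) Y := by
      rintro y ⟨hy, _⟩
      exact hcolY y ((hmem y).mp hy).2 _
    have hΦ' : ContinuousOn (fun y : G → Fin M => act k₀ (φ (col y k₀⁻¹))) (YS ∩ V) :=
      (hcont k₀).comp_continuousOn (hφc.comp hcolcont.continuousOn hmaps)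
    have hcwa : ContinuousWithinAt Ψ (YS ∩ V) y₀ := by
      refine (hΦ' y₀ ⟨hy₀, by simp [hV]⟩).congr ?_ ?_
      · rintro y ⟨_, hyV⟩
        have h1 : y 1 = y₀ 1 := hyV
        simp only [hΨ, hK]
        rw [h1]
      · rfl
    exact (continuousWithinAt_inter hVnhds).mp hcwa
  · -- surjectivity
    rw [Set.eq_univ_iff_forall]
    intro x
    obtain ⟨g, x', hx', hgx⟩ := hgen x
    set q₀ : G ⧸ H := (g : G ⧸ H) with hq₀
    set k : G := Quotient.out q₀ with hk
    have hkg : k⁻¹ * g ∈ H := QuotientGroup.eq.mp (QuotientGroup.out_eq' q₀)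
    set ρ : G := k * ((hpart H k⁻¹ : ↥H) : G) with hρ
    have hh₃ : ρ⁻¹ * g ∈ H := by
      rw [hρ, mul_inv_rev, mul_assoc]
      exact H.mul_mem (H.inv_mem (hpart H k⁻¹).2) hkg
    set h₃ : ↥H := ⟨ρ⁻¹ * g, hh₃⟩ with hh₃def
    have hx'' : act ((h₃ : ↥H) : G) x' ∈ X' := hinv h₃ x' hx'
    have hx''img : act ((h₃ : ↥H) : G) x' ∈ φ '' Y := by rw [hφY]; exact hx''
    obtain ⟨w, hw, hφw⟩ := hx''img
    set y₀ : G → Fin M := fun z => e (z • q₀, w (hpart H z)) with hy₀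
    have hdecy₀ : ∀ z : G, dec (y₀ z) = (z • q₀, w (hpart H z)) := by
      intro z
      simp [hy₀, hdec]
    have hy₀mem : y₀ ∈ YS := by
      rw [hmem]
      constructor
      · intro g₁ s _
        rw [hdecy₀, hdecy₀]
        simp [mul_smul]
      · intro g₁
        have : (fun d : {d // d ∈ D} => (dec (y₀ (((d : ↥H) : G) * g₁))).2)
            = fun d : {d // d ∈ D} => w ((d : ↥H) * hpart H g₁) := by
          funext d
          rw [hdecy₀]
          simp only
          rw [hpart_mul]
        rw [this]
        rw [hYdef] at hw
        exact hw (hpart H g₁)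
    refine ⟨y₀, hy₀mem, ?_⟩
    have hKy₀ : K y₀ = k := by
      simp only [hK]
      rw [hdecy₀]
      simp [one_smul, hk]
    have hcoly₀ : col y₀ k⁻¹ = shiftG (hpart H k⁻¹) w := by
      funext h'
      simp only [hcol, shiftG]
      rw [hdecy₀]
      simp only
      rw [hpart_mul]
    have := hφeq (hpart H k⁻¹) w hw
    simp only at this
    calc Ψ y₀ = act k (φ (col y₀ k⁻¹)) := by rw [hΨ]; simp only; rw [hKy₀]
    _ = act k (φ (shiftG (hpart H k⁻¹) w)) := by rw [hcoly₀]
    _ = act k (act ((hpart H k⁻¹ : ↥H) : G) (φ w)) := by rw [this]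
    _ = act ρ (φ w) := by rw [← hmul, hρ]
    _ = act ρ (act ((h₃ : ↥H) : G) x') := by rw [hφw]
    _ = act (ρ * ((h₃ : ↥H) : G)) x' := (hmul ρ _ x').symm
    _ = x := by
          have hρh : ρ * ((h₃ : ↥H) : G) = g := by
            show ρ * (ρ⁻¹ * g) = g
            exact mul_inv_cancel_left ρ g
          rw [hρh]
          exact hgx
  · -- equivariance
    intro g y hy
    obtain ⟨hPM, hPC⟩ := (hmem y).mp hy
    have hmk := hmark y hPM
    set q : G ⧸ H := (dec (y 1)).1 with hq
    set k : G := Quotient.out q with hk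
    have h1 : (dec (shiftG g y 1)).1 = g • q := by
      show (dec (y (1 * g))).1 = g • q
      have h := hmk g 1
      rw [mul_one] at h
      rw [one_mul, h]
    set k' : G := Quotient.out (g • q) with hk'
    have hkq : ((k : G) : G ⧸ H) = q := QuotientGroup.out_eq' q
    have hk'q : ((k' : G) : G ⧸ H) = ((g * k : G) : G ⧸ H) := by
      rw [hk']
      rw [QuotientGroup.out_eq' (g • q), ← hkq, MulAction.Quotient.smul_mk, smul_eq_mul]
    have hh₀ : (g * k)⁻¹ * k' ∈ H := QuotientGroup.eq.mp hk'q.symm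
    set h₀ : ↥H := ⟨(g * k)⁻¹ * k', hh₀⟩ with hh₀def
    have hk'eq : k' = (g * k) * ((h₀ : ↥H) : G) := by
      rw [hh₀def]
      simp only
      rw [mul_inv_cancel_left]
    have hKs : K (shiftG g y) = k' := by
      simp only [hK]
      rw [h1]
    have hKy : K y = k := rfl
    have hcoleq : col (shiftG g y) k'⁻¹ = shiftG (h₀⁻¹) (col y k⁻¹) := by
      funext h'
      simp only [hcol, shiftG]
      congr 2
      rw [hk'eq]
      push_cast
      group
    have hcolYk : col y k⁻¹ ∈ Y := hcolY y hPC k⁻¹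
    have heq := hφeq h₀⁻¹ (col y k⁻¹) hcolYk
    simp only at heq
    calc Ψ (shiftG g y) = act k' (φ (col (shiftG g y) k'⁻¹)) := by
          rw [hΨ]; simp only; rw [hKs]
    _ = act k' (φ (shiftG h₀⁻¹ (col y k⁻¹))) := by rw [hcoleq]
    _ = act k' (act (((h₀⁻¹ : ↥H) : G)) (φ (col y k⁻¹))) := by rw [heq]
    _ = act (k' * ((h₀⁻¹ : ↥H) : G)) (φ (col y k⁻¹)) := by rw [← hmul]
    _ = act (g * k) (φ (col y k⁻¹)) := by
          congr 1
          rw [hk'eq]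
          push_cast
          group
    _ = act g (act k (φ (col y k⁻¹))) := hmul g k _
    _ = act g (Ψ y) := by rw [show Ψ y = act k (φ (col y k⁻¹)) from by rw [hΨ]]
end

section
/- Let (G,X) be an action of a group G on a compact zero-dimensional metric space. If the topological full group of (G,X) contains a finitely generated subgroup whose action on X is expansive, then the action of G itself on X is expansive. -/
/-- A homeomorphism `h` belongs to the topological full group of the action `act`:
`h` agrees with an element of the group on each piece of a finite clopen partition. -/
def InTFG {G X : Type} [Group G] [TopologicalSpace X] (act : G → X → X) (h : X → X) : Prop :=
  ∃ (k : ℕ) (p : X → Fin k) (g : Fin k → G),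
    (∀ j : Fin k, IsClopen (p ⁻¹' {j})) ∧ ∀ x : X, h x = act (g (p x)) x

/-- Apply a word in the generators `h i` and their inverses. -/
def applyWord {X : Type} [TopologicalSpace X] {n : ℕ} (h : Fin n → X ≃ₜ X) (l : List (Fin n × Bool)) (x : X) : X :=
  l.foldr (fun p z => if p.2 then h p.1 z else (h p.1).symm z) x

/-! Every generator `h i` and its inverse is given by the `G`-action on the pieces of a finite
clopen partition. On a compact space such a partition has a Lebesgue number, so there is one
`δ > 0` such that each generator and each inverse acts on any two `δ`-close points by one and
the same group element. If `x ≠ y` had all `G`-orbit pairs `(g x, g y)` closer than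
both `ε` and `δ`, an induction on words would show that every word in the generators also acts on
`x` and `y` by a single group element; so no word could separate `x` and `y` by more than `ε`,
contradicting expansiveness of the finitely generated subgroup. -/

open Uniformity

def wordLetter {X : Type} [TopologicalSpace X] {n : ℕ} (h : Fin n → X ≃ₜ X)
    (q : Fin n × Bool) : X → X :=
  fun z => if q.2 then h q.1 z else (h q.1).symm z

lemma applyWord_cons {X : Type} [TopologicalSpace X] {n : ℕ} (h : Fin n → X ≃ₜ X)
    (q : Fin n × Bool) (l : List (Fin n × Bool)) (x : X) :
    applyWord h (q :: l) x = wordLetter h q (applyWord h l x) := rfl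

section FullGroup

variable {G X : Type} [Group G] [TopologicalSpace X] {act : G → X → X}

lemma InTFG.homeomorph_symm (hone : ∀ x : X, act 1 x = x)
    (hmul : ∀ (g g' : G) (x : X), act (g * g') x = act g (act g' x))
    {e : X ≃ₜ X} (he : InTFG act e) : InTFG act e.symm := by
  obtain ⟨k, p, g, hclopen, heq⟩ := he
  refine ⟨k, p ∘ e.symm, fun j => (g j)⁻¹, fun j => (hclopen j).preimage e.symm.continuous,
    fun x => ?_⟩
  set w := e.symm x
  have hx : x = act (g (p w)) w := by rw [← heq w, Homeomorph.apply_symm_apply]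
  calc e.symm x = act ((g (p w))⁻¹ * g (p w)) w := by rw [inv_mul_cancel, hone]
    _ = act (g (p w))⁻¹ x := by rw [hmul, ← hx]

lemma inTFG_wordLetter (hone : ∀ x : X, act 1 x = x)
    (hmul : ∀ (g g' : G) (x : X), act (g * g') x = act g (act g' x))
    {n : ℕ} {h : Fin n → X ≃ₜ X} (hTFG : ∀ i, InTFG act (h i)) (q : Fin n × Bool) :
    InTFG act (wordLetter h q) := by
  obtain ⟨i, b⟩ := q
  cases b
  · exact (hTFG i).homeomorph_symm hone hmul
  · exact hTFG i

end FullGroup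

-- On a compact space, close points lie in the same piece of the partition.
lemma InTFG.setOf_exists_act_eq_mem_uniformity {G X : Type} [Group G] [UniformSpace X]
    [CompactSpace X] {act : G → X → X} {f : X → X}
    (hf : InTFG act f) :
    {z : X × X | ∃ g : G, f z.1 = act g z.1 ∧ f z.2 = act g z.2} ∈ 𝓤 X := by
  obtain ⟨k, p, g, hclopen, heq⟩ := hf
  have hp : Continuous p := continuous_discrete_rng.2 fun j => (hclopen j).isOpen
  have hsame : {z : X × X | p z.1 = p z.2} ∈ 𝓤 X := by
    rw [← nhdsSet_diagonal_eq_uniformity]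
    refine (IsOpen.mem_nhdsSet ?_).2 fun z hz => ?_
    · exact (isOpen_discrete (Set.diagonal (Fin k))).preimage (hp.prodMap hp)
    · exact congrArg p (Set.mem_diagonal_iff.1 hz)
  refine Filter.mem_of_superset hsame fun z hz => ⟨g (p z.1), heq z.1, ?_⟩
  rw [heq z.2, hz.out]

lemma exists_act_eq_applyWord {G X : Type} [Group G] [TopologicalSpace X] {act : G → X → X}
    (hone : ∀ x : X, act 1 x = x)
    (hmul : ∀ (g g' : G) (x : X), act (g * g') x = act g (act g' x))
    {n : ℕ} (h : Fin n → X ≃ₜ X) {x y : X}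
    (hletter : ∀ (g : G) (q : Fin n × Bool), ∃ g' : G,
      wordLetter h q (act g x) = act g' (act g x) ∧ wordLetter h q (act g y) = act g' (act g y))
    (l : List (Fin n × Bool)) :
    ∃ g : G, applyWord h l x = act g x ∧ applyWord h l y = act g y := by
  induction l with
  | nil => exact ⟨1, (hone x).symm, (hone y).symm⟩
  | cons q l ih =>
    obtain ⟨g, hx, hy⟩ := ih
    obtain ⟨g', hx', hy'⟩ := hletter g q
    exact ⟨g' * g, by rw [applyWord_cons, hx, hx', hmul], by rw [applyWord_cons, hy, hy', hmul]⟩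

theorem stmt13_general {G X : Type} [Group G] [MetricSpace X] [CompactSpace X]
    (act : G → X → X)
    (hone : ∀ x : X, act 1 x = x)
    (hmul : ∀ (g g' : G) (x : X), act (g * g') x = act g (act g' x))
    (n : ℕ) (h : Fin n → X ≃ₜ X)
    (hTFG : ∀ i, InTFG act (h i))
    (hexp : ∃ ε > 0, ∀ x y : X, x ≠ y →
      ∃ l : List (Fin n × Bool), ε < dist (applyWord h l x) (applyWord h l y)) :
    ∃ ε > 0, ∀ x y : X, x ≠ y → ∃ g : G, ε < dist (act g x) (act g y) := by
  obtain ⟨ε, hε, hexp⟩ := hexp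
  have hU : {z : X × X | ∀ q : Fin n × Bool, ∃ g : G,
      wordLetter h q z.1 = act g z.1 ∧ wordLetter h q z.2 = act g z.2} ∈ 𝓤 X := by
    rw [Set.ofPred_forall]
    exact Filter.iInter_mem.2 fun q =>
      (inTFG_wordLetter hone hmul hTFG q).setOf_exists_act_eq_mem_uniformity
  obtain ⟨δ, hδ, hδU⟩ := Metric.mem_uniformity_dist.1 hU
  refine ⟨min ε (δ / 2), lt_min hε (half_pos hδ), fun x y hxy => ?_⟩
  by_contra! hclose
  have hletter (g : G) :=
    hδU ((hclose g).trans_lt ((min_le_right _ _).trans_lt (half_lt_self hδ)))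
  obtain ⟨l, hl⟩ := hexp x y hxy
  obtain ⟨g, hgx, hgy⟩ := exists_act_eq_applyWord hone hmul h hletter l
  rw [hgx, hgy] at hl
  exact (hl.trans_le ((hclose g).trans (min_le_left _ _))).false

/-- If the topological full group of `(G, X)` contains a finitely generated subgroup
(generated by homeomorphisms `h 0, …, h (n-1)` lying in the topological full group)
acting expansively, then the action of `G` on `X` is expansive. -/
theorem stmt13 {G X : Type} [Group G] [MetricSpace X] [CompactSpace X]
    [TotallyDisconnectedSpace X]
    (act : G → X → X)
    (hcont : ∀ g : G, Continuous (act g))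
    (hone : ∀ x : X, act 1 x = x)
    (hmul : ∀ (g g' : G) (x : X), act (g * g') x = act g (act g' x))
    (n : ℕ) (h : Fin n → X ≃ₜ X)
    (hTFG : ∀ i, InTFG act (h i))
    (hexp : ∃ ε > 0, ∀ x y : X, x ≠ y →
      ∃ l : List (Fin n × Bool), ε < dist (applyWord h l x) (applyWord h l y)) :
    ∃ ε > 0, ∀ x y : X, x ≠ y → ∃ g : G, ε < dist (act g x) (act g y) :=
  stmt13_general act hone hmul n h hTFG hexp
end

section
/- Let φ : X → Y be a continuous open exactly-k-to-1 map between metric spaces with X compact. Then the map y ↦ φ^{-1}(y), from Y to the space of finite subsets of X with the Hausdorff metric, is continuous. -/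
/-- For a continuous open exactly-`k`-to-1 map on a compact metric space, the fiber map
`y ↦ φ⁻¹(y)` is continuous with respect to the Hausdorff metric. -/
theorem stmt16 {X Y : Type} [MetricSpace X] [MetricSpace Y] [CompactSpace X]
    (φ : X → Y) (hc : Continuous φ) (ho : IsOpenMap φ) (hs : Function.Surjective φ)
    (k : ℕ) (hk : ∀ y : Y, Set.ncard (φ ⁻¹' {y}) = k) :
    ∀ y : Y, ∀ ε > 0, ∃ δ > 0, ∀ y' : Y, dist y y' < δ →
      Metric.hausdorffDist (φ ⁻¹' {y}) (φ ⁻¹' {y'}) < ε := by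
  intro y ε hε
  set F := φ ⁻¹' {y} with hF
  have hε4 : (0:ℝ) < ε/4 := by linarith
  have hε2 : (0:ℝ) < ε/2 := by linarith
  have hFc : IsCompact F := (isClosed_singleton.preimage hc).isCompact
  -- finite subcover of F by small balls
  have cover : F ⊆ ⋃ x ∈ F, Metric.ball x (ε/4) := fun x hx =>
    Set.mem_iUnion₂.2 ⟨x, hx, Metric.mem_ball_self hε4⟩
  obtain ⟨s, hsF, hsfin, hscover⟩ :=
    hFc.elim_finite_subcover_image (fun x _ => Metric.isOpen_ball) cover
  -- V : open nbhd of y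
  set V := ⋂ x ∈ s, φ '' Metric.ball x (ε/4) with hVdef
  have hVopen : IsOpen V := by
    apply hsfin.isOpen_biInter
    intro x _
    exact ho _ Metric.isOpen_ball
  have hyV : y ∈ V := by
    refine Set.mem_iInter₂.2 fun x hx => ?_
    have hxF : x ∈ F := hsF hx
    exact ⟨x, Metric.mem_ball_self hε4, hxF⟩
  -- W : open nbhd of y (complement of image of complement of thickening)
  set K := φ '' (Metric.thickening (ε/2) F)ᶜ with hKdef
  have hKclosed : IsClosed K := by
    have : IsCompact ((Metric.thickening (ε/2) F)ᶜ) :=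
      (Metric.isOpen_thickening.isClosed_compl).isCompact
    exact (this.image hc).isClosed
  have hyK : y ∉ K := by
    rintro ⟨z, hz, hzy⟩
    exact hz (Metric.self_subset_thickening hε2 F hzy)
  have hWopen : IsOpen Kᶜ := hKclosed.isOpen_compl
  -- choose δ
  obtain ⟨δ, hδ, hball⟩ := Metric.isOpen_iff.1 (hVopen.inter hWopen) y ⟨hyV, hyK⟩
  refine ⟨δ, hδ, fun y' hy' => ?_⟩
  have hy'mem : y' ∈ V ∩ Kᶜ := hball (by simpa [Metric.mem_ball, dist_comm] using hy')
  have h1 : ∀ x ∈ F, ∃ z ∈ φ ⁻¹' {y'}, dist x z ≤ ε/2 := by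
    intro x hx
    obtain ⟨i, hi, hxi⟩ := Set.mem_iUnion₂.1 (hscover hx)
    obtain ⟨z, hz, hzy'⟩ := Set.mem_iInter₂.1 hy'mem.1 i hi
    refine ⟨z, hzy', ?_⟩
    have := dist_triangle x i z
    have h1 : dist x i < ε/4 := Metric.mem_ball.1 hxi
    have h2 : dist i z < ε/4 := by rw [dist_comm]; exact Metric.mem_ball.1 hz
    linarith
  have h2 : ∀ z ∈ φ ⁻¹' {y'}, ∃ x ∈ F, dist z x ≤ ε/2 := by
    intro z hz
    have hzT : z ∈ Metric.thickening (ε/2) F := by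
      by_contra hzc
      exact hy'mem.2 ⟨z, hzc, hz⟩
    obtain ⟨x, hx, hdx⟩ := Metric.mem_thickening_iff.1 hzT
    exact ⟨x, hx, le_of_lt hdx⟩
  calc Metric.hausdorffDist F (φ ⁻¹' {y'}) ≤ ε/2 :=
        Metric.hausdorffDist_le_of_mem_dist (le_of_lt hε2) h1 h2
    _ < ε := by linarith
end

section
/- Let X be a compact metrizable zero-dimensional space and G a finitely generated group acting on X equicontinuously. Then (G,X) has the pseudo-orbit tracing property. -/
/-!
Equicontinuity together with zero-dimensionality produces, at every scale `ε`, a `G`-invariant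
equivalence relation whose classes are open and of diameter `< ε`: two points are related when
their whole orbits never separate across a fixed finite clopen partition of mesh `< ε`.
Invariance propagates the relation from the generators to all of `G`, so every sufficiently fine
pseudo-orbit `z` stays in the class of the true orbit of `z 1`.
-/

open Metric Set

theorem IsLocallyConstant.exists_pos_forall_dist_lt_imp_eq {X Y : Type*} [PseudoMetricSpace X]
    [CompactSpace X] {f : X → Y} (hf : IsLocallyConstant f) :
    ∃ δ > 0, ∀ x y, dist x y < δ → f x = f y := by
  obtain ⟨δ, hδ, hball⟩ := lebesgue_number_lemma_of_metric isCompact_univ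
    (c := fun x => f ⁻¹' {f x}) (fun x => hf.isOpen_fiber _) fun x _ => mem_iUnion.2 ⟨x, rfl⟩
  refine ⟨δ, hδ, fun x y hxy => ?_⟩
  obtain ⟨c, hc⟩ := hball x (mem_univ x)
  exact (hc (mem_ball_self hδ)).trans (hc (mem_ball'.2 hxy)).symm

theorem exists_continuous_fin_dist_lt_of_eq {X : Type*} [MetricSpace X] [CompactSpace X]
    [TotallyDisconnectedSpace X] {ε : ℝ} (hε : 0 < ε) :
    ∃ (n : ℕ) (π : X → Fin n), Continuous π ∧ ∀ x y, π x = π y → dist x y < ε := by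
  obtain ⟨n, π, c, hπ, hc⟩ := (ContinuousMap.id X).exists_finite_approximation_of_mem_nhds_diagonal
    (nhdsSet_diagonal_le_uniformity (dist_mem_uniformity (half_pos hε)))
  refine ⟨n, π, hπ, fun x y hxy => ?_⟩
  calc dist x y ≤ dist x (c (π x)) + dist y (c (π y)) := by
        rw [hxy]; exact dist_triangle_right _ _ _
    _ < ε / 2 + ε / 2 := add_lt_add (hc x) (hc y)
    _ = ε := add_halves ε

section Action

variable {G X : Type*} [Group G] [MulAction G X]

theorem rel_smul_apply_one_of_rel_generators {S : Set G} (hS : Subgroup.closure S = ⊤)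
    (r : Setoid X) (hr : ∀ (g : G) {x y : X}, r x y → r (g • x) (g • y)) {z : G → X}
    (hz : ∀ g, ∀ s ∈ S, r (s • z g) (z (s * g))) (g : G) : r (g • z 1) (z g) := by
  have hg : g ∈ Subgroup.closure S := hS ▸ Subgroup.mem_top g
  induction hg using Subgroup.closure_induction_left with
  | one => rw [one_smul]
  | mul_left s hs g _ ih => rw [mul_smul]; exact r.trans (hr s ih) (hz g s hs)
  | inv_mul_cancel s hs g _ ih =>
    have h := hr s⁻¹ (hz (s⁻¹ * g) s hs)
    rw [mul_inv_cancel_left, inv_smul_smul] at h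
    rw [mul_smul]
    exact r.trans (hr s⁻¹ ih) (r.symm h)

theorem ker_orbit_rel_smul {α : Type*} (π : X → α) (g : G) {x y : X}
    (h : Setoid.ker (fun x (k : G) => π (k • x)) x y) :
    Setoid.ker (fun x (k : G) => π (k • x)) (g • x) (g • y) :=
  Setoid.ker_def.2 <| funext fun k => by
    simpa only [smul_smul] using congr_fun (Setoid.ker_def.1 h) (k * g)

theorem exists_invariant_setoid_dist_lt [MetricSpace X] [CompactSpace X]
    [TotallyDisconnectedSpace X] (hequi : UniformEquicontinuous fun g : G => (g • · : X → X))
    {ε : ℝ} (hε : 0 < ε) :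
    ∃ r : Setoid X, (∀ (g : G) {x y : X}, r x y → r (g • x) (g • y)) ∧
      (∃ δ > 0, ∀ x y, dist x y < δ → r x y) ∧ ∀ x y, r x y → dist x y < ε := by
  obtain ⟨n, π, hπ, hπε⟩ := exists_continuous_fin_dist_lt_of_eq (X := X) hε
  obtain ⟨η, hη, hπη⟩ :=
    ((IsLocallyConstant.iff_continuous π).2 hπ).exists_pos_forall_dist_lt_imp_eq
  obtain ⟨δ, hδ, hδη⟩ := Metric.uniformEquicontinuous_iff.1 hequi η hη
  refine ⟨Setoid.ker fun x (g : G) => π (g • x), fun g _ _ => ker_orbit_rel_smul π g,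
    ⟨δ, hδ, fun x y hxy => Setoid.ker_def.2 <| funext fun g => hπη _ _ (hδη x y hxy g)⟩,
    fun x y h => hπε x y ?_⟩
  simpa only [one_smul] using congr_fun (Setoid.ker_def.1 h) 1

end Action

theorem stmt19_general {G X : Type} [Group G] (hG : Group.FG G)
    [MetricSpace X] [CompactSpace X] [TotallyDisconnectedSpace X]
    (act : G → X → X)
    (hone : ∀ x : X, act 1 x = x)
    (hmul : ∀ (g g' : G) (x : X), act (g * g') x = act g (act g' x))
    (hequi : ∀ ε > 0, ∃ δ > 0, ∀ (g : G) (x y : X), dist x y < δ →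
      dist (act g x) (act g y) < ε) :
    ∀ ε > 0, ∃ δ > 0, ∃ F : Finset G, ∀ z : G → X,
      (∀ g : G, ∀ s ∈ F, dist (act s (z g)) (z (s * g)) < δ) →
      ∃ x : X, ∀ g : G, dist (act g x) (z g) < ε := by
  let _ : MulAction G X := { smul := act, one_smul := hone, mul_smul := hmul }
  have hequi' : UniformEquicontinuous fun g : G => (g • · : X → X) :=
    Metric.uniformEquicontinuous_iff.2 fun ε hε =>
      (hequi ε hε).imp fun _ ⟨hδ, h⟩ => ⟨hδ, fun x y hxy g => h g x y hxy⟩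
  obtain ⟨S, hS, hSfin⟩ := Group.fg_iff.1 hG
  intro ε hε
  obtain ⟨r, hr, ⟨δ, hδ, hδr⟩, hrε⟩ := exists_invariant_setoid_dist_lt hequi' hε
  refine ⟨δ, hδ, hSfin.toFinset, fun z hz => ⟨z 1, fun g => hrε _ _ ?_⟩⟩
  exact rel_smul_apply_one_of_rel_generators hS r hr
    (fun g s hs => hδr _ _ (hz g s (hSfin.mem_toFinset.2 hs))) g

/-- An equicontinuous action of a finitely generated group on a compact metrizable
zero-dimensional space has the pseudo-orbit tracing property. -/
theorem stmt19 {G X : Type} [Group G] (hG : Group.FG G)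
    [MetricSpace X] [CompactSpace X] [TotallyDisconnectedSpace X]
    (act : G → X → X)
    (hcont : ∀ g : G, Continuous (act g))
    (hone : ∀ x : X, act 1 x = x)
    (hmul : ∀ (g g' : G) (x : X), act (g * g') x = act g (act g' x))
    (hequi : ∀ ε > 0, ∃ δ > 0, ∀ (g : G) (x y : X), dist x y < δ →
      dist (act g x) (act g y) < ε) :
    ∀ ε > 0, ∃ δ > 0, ∃ F : Finset G, ∀ z : G → X,
      (∀ g : G, ∀ s ∈ F, dist (act s (z g)) (z (s * g)) < δ) →
      ∃ x : X, ∀ g : G, dist (act g x) (z g) < ε :=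
  stmt19_general hG act hone hmul hequi
end
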